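/- Let m ≥ 1 be an integer and q_m¹(μ) = (5+(m−1)μ)·(10 + 5(m−1)μ + ((m²−5m−4)/2)μ²), so that q_m¹(μ) = (1/((m+1)μ)) · (dP_μ^m/dη)(1/2). For m ≥ 6, q_m¹(μ) > 0 for all μ > 0. For 1 ≤ m ≤ 5, q_m¹ has exactly one positive root μ_m¹ and q_m¹ is positive on [0, μ_m¹); moreover μ₁¹ = √(5/2), μ₂¹ = 2, μ₃¹ = √3 + 1, μ₄¹ = (15+√385)/8, μ₅¹ = 5+√30, and 0 < μ_m < μ_m¹ for 1 ≤ m ≤ 5, where μ_m is the smallest positive root of q_m(μ) = P_μ^m(1/2). -/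

import Mathlib

/-- The representative polynomial `P_μ^m` of type `I_{1,4}` (real variable). -/
noncomputable def PI14 (m : ℕ) (μ η : ℝ) : ℝ :=
  (1 - μ) * (2 - μ) * (3 - μ) * (4 - μ) +
    5 * ((m : ℝ) + 1) * (1 - μ) * (5 - 3 * μ) * (2 - μ) * μ * η +
    5 * ((m : ℝ) + 1) * ((m : ℝ) + 2) * (1 - μ) * (7 - 5 * μ) * μ ^ 2 * η ^ 2 +
    10 * ((m : ℝ) + 1) * ((m : ℝ) + 2) * ((m : ℝ) + 3) * (1 - μ) * μ ^ 3 * η ^ 3 +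
    ((m : ℝ) + 1) * ((m : ℝ) + 2) * ((m : ℝ) + 3) * ((m : ℝ) + 4) * μ ^ 4 * η ^ 4

/-- `q_m(μ) = P_μ^m(1/2)` for type `I_{1,4}`. -/
noncomputable def qI14 (m : ℕ) (μ : ℝ) : ℝ := PI14 m μ (1 / 2)

/-- `q_m¹(μ) = (5+(m-1)μ)·(10 + 5(m-1)μ + ((m²-5m-4)/2)μ²)` for type `I_{1,4}`. -/
noncomputable def qI14' (m : ℕ) (μ : ℝ) : ℝ :=
  (5 + ((m : ℝ) - 1) * μ) *
    (10 + 5 * ((m : ℝ) - 1) * μ + (((m : ℝ) ^ 2 - 5 * (m : ℝ) - 4) / 2) * μ ^ 2)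

/-!
For `m ≥ 1` and `μ ≥ 0` the factor `5 + (m - 1) μ` of `q_m¹` is positive, so `q_m¹` has the sign
of the quadratic `10 + 5 (m - 1) μ + ((m² - 5m - 4) / 2) μ²`. Its leading coefficient is positive
for `m ≥ 6` and negative for `m ≤ 5`, and a quadratic with positive constant term and negative
leading coefficient has exactly one positive root, before which it is positive.
Reducing `q_m` modulo that quadratic shows `q_m(μ_m¹) < 0`, while `q_m(0) = 24`; the intermediate
value theorem then puts a root of `q_m` in `(0, μ_m¹)`.
-/

theorem hasDerivAt_quartic (a b c d e x : ℝ) :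
    HasDerivAt (fun η : ℝ => a + b * η + c * η ^ 2 + d * η ^ 3 + e * η ^ 4)
      (b + 2 * c * x + 3 * d * x ^ 2 + 4 * e * x ^ 3) x := by
  refine (((((hasDerivAt_const x a).add ((hasDerivAt_id' x).const_mul b)).add
    ((hasDerivAt_pow 2 x).const_mul c)).add ((hasDerivAt_pow 3 x).const_mul d)).add
    ((hasDerivAt_pow 4 x).const_mul e)).congr_deriv ?_
  push_cast
  ring

section Quadratic

variable {a b c : ℝ}

/-- Since `a + r (b + c r) = 0`, the slope `b + c r` is negative, and
`a + b μ + c μ² = (μ - r) (b + c (μ + r))`. -/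
theorem quadratic_pos_of_lt_root (ha : 0 < a) (hc : c ≤ 0) {r μ : ℝ}
    (hr : a + b * r + c * r ^ 2 = 0) (hμ : 0 ≤ μ) (hμr : μ < r) :
    0 < a + b * μ + c * μ ^ 2 := by
  have hr0 : 0 < r := hμ.trans_lt hμr
  have hslope : b + c * r < 0 := by nlinarith
  have hfactor : a + b * μ + c * μ ^ 2 = (μ - r) * (b + c * r + c * μ) := by
    linear_combination hr
  rw [hfactor]
  exact mul_pos_of_neg_of_neg (by linarith) (by nlinarith)

theorem quadratic_root_unique (ha : 0 < a) (hc : c ≤ 0) {r r' : ℝ} (hr : 0 ≤ r) (hr' : 0 ≤ r')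
    (hroot : a + b * r + c * r ^ 2 = 0) (hroot' : a + b * r' + c * r' ^ 2 = 0) : r = r' :=
  le_antisymm (not_lt.1 fun h => (quadratic_pos_of_lt_root ha hc hroot hr' h).ne' hroot')
    (not_lt.1 fun h => (quadratic_pos_of_lt_root ha hc hroot' hr h).ne' hroot)

theorem exists_pos_root_quadratic (ha : 0 < a) (hc : c < 0) :
    ∃ r : ℝ, 0 < r ∧ a + b * r + c * r ^ 2 = 0 := by
  set s := Real.sqrt (b ^ 2 - 4 * a * c)
  have hs : s ^ 2 = b ^ 2 - 4 * a * c := Real.sq_sqrt (by nlinarith [sq_nonneg b])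
  have hbs : |b| < s := abs_lt_of_sq_lt_sq (by nlinarith) (Real.sqrt_nonneg _)
  set r := (b + s) / (-2 * c)
  have hr : -2 * c * r = b + s := mul_div_cancel₀ _ (by linarith : (0 : ℝ) < -2 * c).ne'
  refine ⟨r, div_pos (by linarith [neg_abs_le b]) (by linarith), ?_⟩
  have hscaled : -4 * c * (a + b * r + c * r ^ 2) = 0 := by
    linear_combination (-(s - 2 * c * r - b)) * hr - hs
  exact (mul_eq_zero.1 hscaled).resolve_left (by linarith)

theorem existsUnique_pos_root_quadratic (ha : 0 < a) (hc : c < 0) :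
    ∃! r : ℝ, 0 < r ∧ a + b * r + c * r ^ 2 = 0 :=
  let ⟨r, hr, hroot⟩ := exists_pos_root_quadratic ha hc
  ⟨r, ⟨hr, hroot⟩, fun _ ⟨hr', hroot'⟩ => quadratic_root_unique ha hc.le hr'.le hr.le hroot' hroot⟩

end Quadratic

theorem deriv_PI14_half (m : ℕ) (μ : ℝ) :
    deriv (fun η : ℝ => PI14 m μ η) (1 / 2) = ((m : ℝ) + 1) * μ * qI14' m μ := by
  unfold PI14
  rw [(hasDerivAt_quartic _ _ _ _ _ _).deriv, qI14']
  ring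

section FirstFactor

variable {m : ℕ} {μ : ℝ}

theorem qI14'_first_factor_pos (hm : 1 ≤ m) (hμ : 0 ≤ μ) : 0 < 5 + ((m : ℝ) - 1) * μ := by
  have hm' : (1 : ℝ) ≤ m := by exact_mod_cast hm
  exact add_pos_of_pos_of_nonneg (by norm_num) (mul_nonneg (by linarith) hμ)

theorem qI14'_eq_zero_iff (hm : 1 ≤ m) (hμ : 0 ≤ μ) :
    qI14' m μ = 0 ↔
      10 + 5 * ((m : ℝ) - 1) * μ + (((m : ℝ) ^ 2 - 5 * (m : ℝ) - 4) / 2) * μ ^ 2 = 0 := by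
  rw [qI14', mul_eq_zero, or_iff_right (qI14'_first_factor_pos hm hμ).ne']

theorem qI14'_pos_iff (hm : 1 ≤ m) (hμ : 0 ≤ μ) :
    0 < qI14' m μ ↔
      0 < 10 + 5 * ((m : ℝ) - 1) * μ + (((m : ℝ) ^ 2 - 5 * (m : ℝ) - 4) / 2) * μ ^ 2 :=
  mul_pos_iff_of_pos_left (qI14'_first_factor_pos hm hμ)

end FirstFactor

theorem qI14'_leading_coeff_neg {m : ℕ} (hm : m ≤ 5) : ((m : ℝ) ^ 2 - 5 * (m : ℝ) - 4) / 2 < 0 := by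
  have hm' : (m : ℝ) ≤ 5 := by exact_mod_cast hm
  nlinarith [m.cast_nonneg (α := ℝ)]

theorem qI14'_pos_of_six_le {m : ℕ} (hm : 6 ≤ m) {μ : ℝ} (hμ : 0 < μ) : 0 < qI14' m μ := by
  have hm' : (6 : ℝ) ≤ m := by exact_mod_cast hm
  have hc : 0 ≤ ((m : ℝ) ^ 2 - 5 * (m : ℝ) - 4) / 2 := by nlinarith
  refine (qI14'_pos_iff (by omega) hμ.le).2 ?_
  have hb : 0 ≤ 5 * ((m : ℝ) - 1) := by linarith
  positivity

section SmallM

variable {m : ℕ}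

theorem existsUnique_pos_root_qI14' (h1 : 1 ≤ m) (h5 : m ≤ 5) : ∃! r : ℝ, 0 < r ∧ qI14' m r = 0 := by
  obtain ⟨r, ⟨hr, hroot⟩, huniq⟩ :=
    existsUnique_pos_root_quadratic (a := 10) (b := 5 * ((m : ℝ) - 1)) (by norm_num)
      (qI14'_leading_coeff_neg h5)
  exact ⟨r, ⟨hr, (qI14'_eq_zero_iff h1 hr.le).2 hroot⟩,
    fun s ⟨hs, hsroot⟩ => huniq s ⟨hs, (qI14'_eq_zero_iff h1 hs.le).1 hsroot⟩⟩

theorem qI14'_pos_of_lt_root (h1 : 1 ≤ m) (h5 : m ≤ 5) {r μ : ℝ} (hroot : qI14' m r = 0) (hμ : 0 ≤ μ) (hμr : μ < r) :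
    0 < qI14' m μ :=
  (qI14'_pos_iff h1 hμ).2 <| quadratic_pos_of_lt_root (by norm_num) (qI14'_leading_coeff_neg h5).le
    ((qI14'_eq_zero_iff h1 (hμ.trans hμr.le)).1 hroot) hμ hμr

theorem qI14_neg_of_qI14'_eq_zero (h1 : 1 ≤ m) (h5 : m ≤ 5) {r : ℝ} (hr : 0 < r)
    (hroot : qI14' m r = 0) : qI14 m r < 0 := by
  have hg := (qI14'_eq_zero_iff h1 hr.le).1 hroot
  interval_cases m <;> push_cast at hg <;> simp only [qI14, PI14] <;> push_cast
  · have hr2 : r ^ 2 = 5 / 2 := by linear_combination -hg / 4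
    linear_combination (r ^ 2 - 15) * hr2
  · have hr2 : r ^ 2 = 2 + r := by linear_combination -hg / 5
    linear_combination (r ^ 2 - 9 * r - 49 / 2) * hr2 + 35 / 2 * hr
  · have hr2 : r ^ 2 = 2 + 2 * r := by linear_combination -hg / 5
    linear_combination (-3 / 2 * r ^ 2 - 23 * r - 49) * hr2 + 94 * hr
  · have hr2 : r ^ 2 = 5 / 2 + 15 / 4 * r := by linear_combination -hg / 4
    linear_combination (-13 / 2 * r ^ 2 - 375 / 8 * r - 5025 / 32) * hr2 + 80775 / 128 * hr
  · have hr2 : r ^ 2 = 5 + 10 * r := by linear_combination -hg / 2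
    linear_combination (-25 / 2 * r ^ 2 - 135 * r - 1325) * hr2 + 13825 * hr

theorem exists_root_qI14_lt (h1 : 1 ≤ m) (h5 : m ≤ 5) {r : ℝ} (hr : 0 < r)
    (hroot : qI14' m r = 0) : ∃ x ∈ Set.Ioo 0 r, qI14 m x = 0 := by
  have hcont : Continuous (qI14 m) := by
    unfold qI14 PI14
    fun_prop
  have h0 : qI14 m 0 = 24 := by norm_num [qI14, PI14]
  refine intermediate_value_Ioo' hr.le hcont.continuousOn ⟨?_, ?_⟩
  · exact qI14_neg_of_qI14'_eq_zero h1 h5 hr hroot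
  · rw [h0]; norm_num

end SmallM

/-- Sign of `(dP_μ^m/dη)(1/2)` for type `I_{1,4}`:
`q_m¹(μ) = (1/((m+1)μ))·(dP_μ^m/dη)(1/2)`; positive for all `μ > 0` when
`m ≥ 6`; for `1 ≤ m ≤ 5` a unique positive root `μ_m¹`, positivity on
`[0, μ_m¹)`, explicit values `μ₁¹ = √(5/2)`, `μ₂¹ = 2`, `μ₃¹ = √3+1`,
`μ₄¹ = (15+√385)/8`, `μ₅¹ = 5+√30`, and `0 < μ_m < μ_m¹` where `μ_m` is the
smallest positive root of `q_m`. -/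
theorem qI14'_sign :
    (∀ m : ℕ, 1 ≤ m → ∀ μ : ℝ, 0 < μ →
      qI14' m μ = (1 / (((m : ℝ) + 1) * μ)) * deriv (fun η : ℝ => PI14 m μ η) (1 / 2)) ∧
    (∀ m : ℕ, 6 ≤ m → ∀ μ : ℝ, 0 < μ → 0 < qI14' m μ) ∧
    (∀ m : ℕ, 1 ≤ m → m ≤ 5 → ∃! r : ℝ, 0 < r ∧ qI14' m r = 0) ∧
    (∀ m : ℕ, 1 ≤ m → m ≤ 5 → ∀ r : ℝ, 0 < r → qI14' m r = 0 →
      (∀ μ : ℝ, 0 ≤ μ → μ < r → 0 < qI14' m μ) ∧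
      (∀ μm : ℝ, 0 < μm → qI14 m μm = 0 →
        (∀ x : ℝ, 0 < x → qI14 m x = 0 → μm ≤ x) → μm < r)) ∧
    qI14' 1 (Real.sqrt (5 / 2)) = 0 ∧
    qI14' 2 2 = 0 ∧
    qI14' 3 (Real.sqrt 3 + 1) = 0 ∧
    qI14' 4 ((15 + Real.sqrt 385) / 8) = 0 ∧
    qI14' 5 (5 + Real.sqrt 30) = 0 := by
  refine ⟨fun m _ μ hμ => ?_, fun m hm μ hμ => qI14'_pos_of_six_le hm hμ,
    fun m h1 h5 => existsUnique_pos_root_qI14' h1 h5, fun m h1 h5 r hr hroot => ⟨?_, ?_⟩,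
    ?_, by norm_num [qI14'], ?_, ?_, ?_⟩
  · rw [deriv_PI14_half]
    field_simp
  · exact fun μ hμ hμr => qI14'_pos_of_lt_root h1 h5 hroot hμ hμr
  · intro μm _ _ hmin
    obtain ⟨x, ⟨hx0, hxr⟩, hx⟩ := exists_root_qI14_lt h1 h5 hr hroot
    exact (hmin x hx0 hx).trans_lt hxr
  · unfold qI14'
    push_cast
    linear_combination (-20 : ℝ) * Real.sq_sqrt (show (0 : ℝ) ≤ 5 / 2 by norm_num)
  · unfold qI14'
    push_cast
    linear_combination (-(35 + 10 * √3) : ℝ) * Real.sq_sqrt (show (0 : ℝ) ≤ 3 by norm_num)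
  · unfold qI14'
    push_cast
    linear_combination (-(85 + 3 * √385) / 128 : ℝ) * Real.sq_sqrt (show (0 : ℝ) ≤ 385 by norm_num)
  · unfold qI14'
    push_cast
    linear_combination (-2 * (25 + 4 * √30) : ℝ) * Real.sq_sqrt (show (0 : ℝ) ≤ 30 by norm_num)
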